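/- Let U_0, …, U_d denote any one of the six decompositions [0D], [0*D*], [0*D], [0*0], [D*0], [D*D] of V. Then for 0 ≤ i ≤ d the actions of K and K^{−1} on U_i satisfy: for [0D]: (K − q^{2i−d}I)U_i ⊆ U_{i+1} + ⋯ + U_d and (K^{−1} − q^{d−2i}I)U_i ⊆ U_{i+1}; for [0*D*]: (K − q^{2i−d}I)U_i ⊆ U_{i−1} and (K^{−1} − q^{d−2i}I)U_i ⊆ U_0 + ⋯ + U_{i−1}; for [0*D]: (K − q^{2i−d}I)U_i = 0 and (K^{−1} − q^{d−2i}I)U_i = 0; for [0*0]: (K − q^{2i−d}I)U_i ⊆ U_0 + ⋯ + U_{i−1} and (K^{−1} − q^{d−2i}I)U_i ⊆ U_{i−1}; for [D*0]: KU_i ⊆ U_0 + ⋯ + U_{i+1} and K^{−1}U_i ⊆ U_{i−1} + ⋯ + U_d; for [D*D]: (K − q^{2i−d}I)U_i ⊆ U_{i+1} and (K^{−1} − q^{d−2i}I)U_i ⊆ U_{i+1} + ⋯ + U_d. -/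

import Mathlib

noncomputable section

open Submodule

variable {K : Type*} [Field K]

/-- `[n]_q = (q^n − q^{−n})/(q − q^{−1})`. -/
def qInt (q : K) (n : ℤ) : K := (q ^ n - q ^ (-n)) / (q - q⁻¹)

/-- Elements `y₀⁺, y₁⁺, y₀⁻, y₁⁻, k₀, k₀⁻¹, k₁, k₁⁻¹` of a unital associative `K`-algebra
satisfy the alternate relations. -/
structure AlternateRelations (q : K) {A : Type*} [Ring A] [Algebra K A]
    (yp ym k kinv : Fin 2 → A) : Prop where
  k_kinv : ∀ i, k i * kinv i = 1
  kinv_k : ∀ i, kinv i * k i = 1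
  central_yp : ∀ i, k 0 * k 1 * yp i = yp i * (k 0 * k 1)
  central_ym : ∀ i, k 0 * k 1 * ym i = ym i * (k 0 * k 1)
  central_k : ∀ i, k 0 * k 1 * k i = k i * (k 0 * k 1)
  central_kinv : ∀ i, k 0 * k 1 * kinv i = kinv i * (k 0 * k 1)
  rel_yp_k : ∀ i, (q - q⁻¹)⁻¹ • (q • (yp i * k i) - q⁻¹ • (k i * yp i)) = 1
  rel_k_ym : ∀ i, (q - q⁻¹)⁻¹ • (q • (k i * ym i) - q⁻¹ • (ym i * k i)) = 1
  rel_ym_yp : ∀ i, (q - q⁻¹)⁻¹ • (q • (ym i * yp i) - q⁻¹ • (yp i * ym i)) = 1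
  rel_yp_ym : ∀ i j, i ≠ j →
    (q - q⁻¹)⁻¹ • (q • (yp i * ym j) - q⁻¹ • (ym j * yp i)) = kinv 0 * kinv 1
  serre_p : ∀ i j, i ≠ j →
    yp i ^ 3 * yp j - qInt q 3 • (yp i ^ 2 * yp j * yp i)
      + qInt q 3 • (yp i * yp j * yp i ^ 2) - yp j * yp i ^ 3 = 0
  serre_m : ∀ i j, i ≠ j →
    ym i ^ 3 * ym j - qInt q 3 • (ym i ^ 2 * ym j * ym i)
      + qInt q 3 • (ym i * ym j * ym i ^ 2) - ym j * ym i ^ 3 = 0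

/-- Elements `e₀⁺, e₁⁺, e₀⁻, e₁⁻, K₀, K₀⁻¹, K₁, K₁⁻¹` of a unital associative `K`-algebra
satisfy the Chevalley relations of `U_q(sl₂ hat)`. -/
structure ChevalleyRelations (q : K) {A : Type*} [Ring A] [Algebra K A]
    (ep em Kg Kginv : Fin 2 → A) : Prop where
  K_Kinv : ∀ i, Kg i * Kginv i = 1
  Kinv_K : ∀ i, Kginv i * Kg i = 1
  K_comm : Kg 0 * Kg 1 = Kg 1 * Kg 0
  KepK_same : ∀ i, Kg i * ep i * Kginv i = (q ^ (2 : ℤ)) • ep i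
  KemK_same : ∀ i, Kg i * em i * Kginv i = (q ^ (-2 : ℤ)) • em i
  KepK_diff : ∀ i j, i ≠ j → Kg i * ep j * Kginv i = (q ^ (-2 : ℤ)) • ep j
  KemK_diff : ∀ i j, i ≠ j → Kg i * em j * Kginv i = (q ^ (2 : ℤ)) • em j
  e_comm_same : ∀ i, ep i * em i - em i * ep i = (q - q⁻¹)⁻¹ • (Kg i - Kginv i)
  e_comm_diff : ∀ i j, i ≠ j → ep i * em j = em j * ep i
  serre_p : ∀ i j, i ≠ j →
    ep i ^ 3 * ep j - qInt q 3 • (ep i ^ 2 * ep j * ep i)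
      + qInt q 3 • (ep i * ep j * ep i ^ 2) - ep j * ep i ^ 3 = 0
  serre_m : ∀ i j, i ≠ j →
    em i ^ 3 * em j - qInt q 3 • (em i ^ 2 * em j * em i)
      + qInt q 3 • (em i * em j * em i ^ 2) - em j * em i ^ 3 = 0

variable {V : Type*} [AddCommGroup V] [Module K V]

/-- A decomposition of `V` of length `d`: nonzero subspaces `U 0, …, U d`
(indexed by `ℤ`, with `U i = ⊥` outside `[0, d]`) whose direct sum is `V`. -/
structure IsDecomposition (d : ℕ) (U : ℤ → Submodule K V) : Prop where
  bot_of_lt : ∀ i : ℤ, i < 0 → U i = ⊥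
  bot_of_gt : ∀ i : ℤ, (d : ℤ) < i → U i = ⊥
  ne_bot : ∀ i : ℤ, 0 ≤ i → i ≤ (d : ℤ) → U i ≠ ⊥
  indep : iSupIndep U
  sup_eq_top : ⨆ i, U i = ⊤

/-- `A, A*` is a tridiagonal pair on `V` with standard orderings `Vs 0, …, Vs d` and
`Vs' 0, …, Vs' d` of the eigenspaces of `A` resp. `A*`, with corresponding eigenvalues
`θ i` resp. `θ' i`. -/
structure IsTridiagonalPair (A A' : Module.End K V) (d : ℕ)
    (Vs Vs' : ℤ → Submodule K V) (θ θ' : ℤ → K) : Prop where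
  decompV : IsDecomposition d Vs
  decompV' : IsDecomposition d Vs'
  eig : ∀ i : ℤ, ∀ v ∈ Vs i, A v = θ i • v
  eig' : ∀ i : ℤ, ∀ v ∈ Vs' i, A' v = θ' i • v
  theta_inj : ∀ i j : ℤ, 0 ≤ i → i ≤ (d : ℤ) → 0 ≤ j → j ≤ (d : ℤ) → θ i = θ j → i = j
  theta'_inj : ∀ i j : ℤ, 0 ≤ i → i ≤ (d : ℤ) → 0 ≤ j → j ≤ (d : ℤ) → θ' i = θ' j → i = j
  trid : ∀ i : ℤ, (Vs i).map A' ≤ Vs (i - 1) ⊔ Vs i ⊔ Vs (i + 1)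
  trid' : ∀ i : ℤ, (Vs' i).map A ≤ Vs' (i - 1) ⊔ Vs' i ⊔ Vs' (i + 1)
  irred : ∀ W : Submodule K V, W.map A ≤ W → W.map A' ≤ W → W = ⊥ ∨ W = ⊤

/-- The sum `U m + U (m+1) + ⋯ + U n`. -/
def sumIcc (U : ℤ → Submodule K V) (m n : ℤ) : Submodule K V :=
  ⨆ j ∈ Set.Icc m n, U j

/-- Decomposition `[0D]`: the `i`-th subspace is `V_i`. -/
def dec0D (Vs : ℤ → Submodule K V) : ℤ → Submodule K V := Vs

/-- Decomposition `[0*D*]`: the `i`-th subspace is `V*_i`. -/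
def dec0sDs (Vs' : ℤ → Submodule K V) : ℤ → Submodule K V := Vs'

/-- Decomposition `[0*D]`: the `i`-th subspace is `(V*_0+⋯+V*_i) ∩ (V_i+⋯+V_d)`. -/
def dec0sD (d : ℕ) (Vs Vs' : ℤ → Submodule K V) (i : ℤ) : Submodule K V :=
  sumIcc Vs' 0 i ⊓ sumIcc Vs i (d : ℤ)

/-- Decomposition `[0*0]`: the `i`-th subspace is `(V*_0+⋯+V*_i) ∩ (V_0+⋯+V_{d−i})`. -/
def dec0s0 (d : ℕ) (Vs Vs' : ℤ → Submodule K V) (i : ℤ) : Submodule K V :=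
  sumIcc Vs' 0 i ⊓ sumIcc Vs 0 ((d : ℤ) - i)

/-- Decomposition `[D*0]`: the `i`-th subspace is `(V*_{d−i}+⋯+V*_d) ∩ (V_0+⋯+V_{d−i})`. -/
def decDs0 (d : ℕ) (Vs Vs' : ℤ → Submodule K V) (i : ℤ) : Submodule K V :=
  sumIcc Vs' ((d : ℤ) - i) (d : ℤ) ⊓ sumIcc Vs 0 ((d : ℤ) - i)

/-- Decomposition `[D*D]`: the `i`-th subspace is `(V*_{d−i}+⋯+V*_d) ∩ (V_i+⋯+V_d)`. -/
def decDsD (d : ℕ) (Vs Vs' : ℤ → Submodule K V) (i : ℤ) : Submodule K V :=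
  sumIcc Vs' ((d : ℤ) - i) (d : ℤ) ⊓ sumIcc Vs i (d : ℤ)

/-!
Write `X i = V*_0 + ⋯ + V*_i` and `Y i = V_i + ⋯ + V_d`. On `X i ∩ Y j` the map `A - θ_j` raises
both indices and `A* - θ*_i` lowers both, so by irreducibility `∑ᵢ X i ∩ Y (i + 1) = 0` (it
misses `V_0`) and `∑ᵢ X i ∩ Y i = V` (it contains `V*_0`). Hence the split decomposition
`U i = X i ∩ Y i` (this is `[0*D]`) satisfies `U_0 + ⋯ + U_i = X i` and `U_i + ⋯ + U_d = Y i`;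
reversing one or both standard orderings gives the analogous identities for `[0*0]`, `[D*D]` and
`[D*0]`. Since `K` is diagonal on `U`, these flag identities yield the triangular inclusions. The
two bidiagonal ones (`K⁻¹` on `V_i`, `K` on `V*_i`) come from the relations
`A K⁻¹ = q² K⁻¹ A + a (1 - q²)` and `A* K = q² K A* + a* (1 - q²)`, which hold because `A` raises
and `A*` lowers the split decomposition: `K⁻¹ - q^{d-2i}` then maps the `θ_i`-eigenspace of `A`
into the `q² θ_i = θ_{i+1}`-eigenspace.
-/

section Flags

variable {U : ℤ → Submodule K V} {m n : ℤ}

theorem le_sumIcc {j : ℤ} (hm : m ≤ j) (hn : j ≤ n) : U j ≤ sumIcc U m n :=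
  le_iSup₂ (f := fun j _ => U j) j ⟨hm, hn⟩

theorem sumIcc_le {W : Submodule K V} (h : ∀ j, m ≤ j → j ≤ n → U j ≤ W) : sumIcc U m n ≤ W :=
  iSup₂_le fun j hj => h j hj.1 hj.2

theorem sumIcc_mono {m' n' : ℤ} (hm : m' ≤ m) (hn : n ≤ n') : sumIcc U m n ≤ sumIcc U m' n' :=
  sumIcc_le fun _ hj hj' => le_sumIcc (hm.trans hj) (hj'.trans hn)

theorem sumIcc_eq_bot (h : n < m) : sumIcc U m n = ⊥ :=
  eq_bot_iff.2 <| sumIcc_le fun _ hj hj' => absurd (hj.trans hj') (not_le.2 h)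

theorem sumIcc_le_sup {k l : ℤ} (hkl : l ≤ k + 1) :
    sumIcc U m n ≤ sumIcc U m k ⊔ sumIcc U l n :=
  sumIcc_le fun j hj hj' => (le_or_gt j k).elim
    (fun hjk => (le_sumIcc hj hjk).trans le_sup_left)
    (fun hjk => (le_sumIcc (by omega) hj').trans le_sup_right)

theorem iSup_le_sumIcc (h : ∀ j, j < m ∨ n < j → U j = ⊥) : ⨆ j, U j ≤ sumIcc U m n :=
  iSup_le fun j =>
    if hj : m ≤ j ∧ j ≤ n then le_sumIcc hj.1 hj.2 else (h j (by omega)).trans_le bot_le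

theorem sumIcc_comp_sub (c : ℤ) :
    sumIcc (fun j => U (c - j)) m n = sumIcc U (c - n) (c - m) :=
  le_antisymm (sumIcc_le fun _ hj hj' => le_sumIcc (by omega) (by omega))
    (sumIcc_le fun j hj hj' => by
      simpa using le_sumIcc (U := fun j => U (c - j)) (j := c - j) (by omega) (by omega))

theorem map_sumIcc_le {F : Module.End K V} {W : Submodule K V}
    (h : ∀ j, m ≤ j → j ≤ n → (U j).map F ≤ W) : (sumIcc U m n).map F ≤ W :=
  map_le_iff_le_comap.2 <| sumIcc_le fun j hj hj' => map_le_iff_le_comap.1 (h j hj hj')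

variable {F : Module.End K V} {e : ℤ → K}

theorem map_sub_smul_sumIcc_succ_le (hF : ∀ j, ∀ v ∈ U j, F v = e j • v) (i : ℤ) :
    (sumIcc U i n).map (F - e i • 1) ≤ sumIcc U (i + 1) n :=
  map_sumIcc_le fun j hij hjn => by
    rintro _ ⟨v, hv, rfl⟩
    have hFv : (F - e i • 1) v = (e j - e i) • v := by simp [hF j v hv, sub_smul]
    obtain rfl | hij := hij.eq_or_lt
    · simp [hFv]
    · exact hFv ▸ smul_mem _ _ (le_sumIcc hij hjn hv)

theorem map_sub_smul_sumIcc_pred_le (hF : ∀ j, ∀ v ∈ U j, F v = e j • v) (i : ℤ) :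
    (sumIcc U m i).map (F - e i • 1) ≤ sumIcc U m (i - 1) :=
  map_sumIcc_le fun j hmj hji => by
    rintro _ ⟨v, hv, rfl⟩
    have hFv : (F - e i • 1) v = (e j - e i) • v := by simp [hF j v hv, sub_smul]
    obtain rfl | hji := hji.eq_or_lt
    · simp [hFv]
    · exact hFv ▸ smul_mem _ _ (le_sumIcc hmj (by omega) hv)

end Flags

section Operators

variable {F L : Module.End K V} {W W' : Submodule K V}

theorem map_sub_smul_one_le (c : K) (hF : W.map F ≤ W') (hW : W ≤ W') :
    W.map (F - c • 1) ≤ W' := by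
  rintro _ ⟨v, hv, rfl⟩
  simpa using sub_mem (hF ⟨v, hv, rfl⟩) (smul_mem _ c (hW hv))

theorem map_le_sup_map_sub_smul_one (c : K) : W.map F ≤ W ⊔ W.map (F - c • 1) := by
  rintro _ ⟨v, hv, rfl⟩
  have hFv : F v = c • v + (F - c • 1) v := by simp
  exact hFv ▸ add_mem_sup (smul_mem _ c hv) (mem_map_of_mem hv)

theorem map_sub_smul_one_eq_bot {c : K} (h : ∀ v ∈ W, F v = c • v) : W.map (F - c • 1) = ⊥ :=
  eq_bot_iff.2 <| by rintro _ ⟨v, hv, rfl⟩; simp [h v hv]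

theorem apply_eq_smul_of_mul_eq_one (hLF : L * F = 1) {c c' : K} (hc : c' * c = 1) {v : V}
    (hv : F v = c • v) : L v = c' • v :=
  calc L v = L ((c' * c) • v) := by rw [hc, one_smul]
    _ = c' • L (F v) := by rw [hv, mul_smul, map_smul]
    _ = c' • v := by rw [← Module.End.mul_apply, hLF, Module.End.one_apply]

theorem mul_eq_smul_mul_add_of_map_sub_smul_le {U : ℤ → Submodule K V} {m n s : ℤ}
    (hU : sumIcc U m n = ⊤) {A : Module.End K V} {θ μ : ℤ → K} {c κ : K}
    (hL : ∀ j, ∀ v ∈ U j, L v = μ j • v) (hA : ∀ j, (U j).map (A - θ j • 1) ≤ U (j + s))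
    (hμ : ∀ j, μ j = c * μ (j + s)) (hθμ : ∀ j, m ≤ j → j ≤ n → θ j * μ j = κ) :
    A * L = c • (L * A) + (κ * (1 - c)) • 1 := by
  rw [← sub_eq_zero, ← LinearMap.ker_eq_top, eq_top_iff, ← hU]
  refine sumIcc_le fun j hmj hjn v hv => ?_
  obtain ⟨r, hr, hAv⟩ : ∃ r ∈ U (j + s), A v = θ j • v + r :=
    ⟨(A - θ j • 1) v, hA j ⟨v, hv, rfl⟩, by simp⟩
  have key : θ j * μ j = κ := hθμ j hmj hjn
  simp only [LinearMap.mem_ker, LinearMap.sub_apply, LinearMap.add_apply, LinearMap.smul_apply,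
    Module.End.mul_apply, Module.End.one_apply, map_add, map_smul, smul_add, hL j v hv, hAv,
    hL _ r hr, hμ j, ← key]
  module

theorem map_sub_smul_eigenspace_le {A : Module.End K V} {c κ θ μ : K}
    (hAL : A * L = c • (L * A) + (κ * (1 - c)) • 1) (hθμ : θ * μ = κ) :
    (A.eigenspace θ).map (L - μ • 1) ≤ A.eigenspace (c * θ) := by
  rintro _ ⟨v, hv, rfl⟩
  rw [SetLike.mem_coe, Module.End.mem_eigenspace_iff] at hv
  rw [Module.End.mem_eigenspace_iff]
  have hALv : A (L v) = c • L (A v) + (κ * (1 - c)) • v := by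
    simpa only [Module.End.mul_apply, LinearMap.add_apply, LinearMap.smul_apply,
      Module.End.one_apply] using congr($hAL v)
  simp only [LinearMap.sub_apply, LinearMap.smul_apply, Module.End.one_apply, map_sub, map_smul,
    hALv, hv, ← hθμ]
  module

end Operators

theorem zpow_injective_of_pow_ne_one {q : K} (hq0 : q ≠ 0) (hq : ∀ n : ℕ, 0 < n → q ^ n ≠ 1) :
    Function.Injective (fun n : ℤ => q ^ n) := by
  have hfin : ¬IsOfFinOrder (Units.mk0 q hq0) := by
    rw [isOfFinOrder_iff_pow_eq_one]
    rintro ⟨n, hn, h⟩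
    exact hq n hn (by simpa [Units.ext_iff] using h)
  intro m n hmn
  exact injective_zpow_iff_not_isOfFinOrder.2 hfin (Units.ext (by simpa using hmn))

namespace IsDecomposition

variable {d : ℕ} {U : ℤ → Submodule K V}

theorem eq_bot_of_lt_or_gt (hD : IsDecomposition d U) {j : ℤ} (hj : j < 0 ∨ (d : ℤ) < j) :
    U j = ⊥ :=
  hj.elim (hD.bot_of_lt j) (hD.bot_of_gt j)

theorem sumIcc_eq_top (hD : IsDecomposition d U) : sumIcc U 0 d = ⊤ :=
  top_unique <| hD.sup_eq_top ▸ iSup_le_sumIcc fun _ => hD.eq_bot_of_lt_or_gt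

theorem le_sumIcc_zero (hD : IsDecomposition d U) {j n : ℤ} (h : j ≤ n) : U j ≤ sumIcc U 0 n :=
  if hj : 0 ≤ j then le_sumIcc hj h else (hD.bot_of_lt j (by omega)).trans_le bot_le

theorem le_sumIcc_d (hD : IsDecomposition d U) {j m : ℤ} (h : m ≤ j) : U j ≤ sumIcc U m d :=
  if hj : j ≤ d then le_sumIcc h hj else (hD.bot_of_gt j (by omega)).trans_le bot_le

theorem disjoint_sumIcc (hD : IsDecomposition d U) {j m n : ℤ} (h : j < m ∨ n < j) :
    Disjoint (U j) (sumIcc U m n) :=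
  hD.indep.disjoint_biSup fun hj => by simp only [Set.mem_Icc] at hj; omega

theorem eigenspace_le (hD : IsDecomposition d U) {A : Module.End K V} {θ : ℤ → K}
    (hA : ∀ j, ∀ v ∈ U j, A v = θ j • v) {μ : K} {m : ℤ}
    (hμ : ∀ j : ℤ, 0 ≤ j → j ≤ d → j ≠ m → θ j ≠ μ) : A.eigenspace μ ≤ U m := by
  set Q := ⨆ (ν : K) (_ : ν ≠ μ), A.eigenspace ν
  have hle : ∀ j, U j ≤ A.eigenspace (θ j) := fun j v hv =>
    Module.End.mem_eigenspace_iff.2 (hA j v hv)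
  have hQ : ∀ j, θ j ≠ μ → U j ≤ Q := fun j hj =>
    (hle j).trans (le_iSup₂ (f := fun ν _ => A.eigenspace ν) (θ j) hj)
  have htop : ⊤ ≤ U m ⊔ Q := hD.sup_eq_top ▸ iSup_le fun j => by
    rcases eq_or_ne j m with rfl | hjm
    · exact le_sup_left
    · by_cases hj : 0 ≤ j ∧ j ≤ d
      · exact (hQ j (hμ j hj.1 hj.2 hjm)).trans le_sup_right
      · exact (hD.eq_bot_of_lt_or_gt (by omega)).trans_le bot_le
  have hdisj : Disjoint (A.eigenspace μ) Q := A.eigenspaces_iSupIndep μ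
  by_cases hm : θ m = μ
  · exact (eq_of_le_of_inf_le_of_le_sup (hm ▸ hle m) (hdisj.eq_bot ▸ bot_le)
      (le_top.trans htop)).ge
  · have hQtop : ⊤ ≤ Q := htop.trans (sup_le (hQ m hm) le_rfl)
    exact (hdisj.eq_bot_of_le (le_top.trans hQtop)).trans_le bot_le

theorem comp_sub (hD : IsDecomposition d U) : IsDecomposition d (fun j => U (d - j)) where
  bot_of_lt _ hi := hD.bot_of_gt _ (by omega)
  bot_of_gt _ hi := hD.bot_of_lt _ (by omega)
  ne_bot _ h0 hd := hD.ne_bot _ (by omega) (by omega)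
  indep := hD.indep.comp fun x y (h : (d : ℤ) - x = d - y) => by omega
  sup_eq_top := top_unique <| hD.sup_eq_top ▸ iSup_le fun j => by
    simpa using le_iSup (fun j => U (d - j)) (d - j)

theorem map_sumIcc_zero_le (hD : IsDecomposition d U) {F : Module.End K V} {e : ℤ → K}
    (hF : ∀ j, (U j).map (F - e j • 1) ≤ U (j + 1)) {m n : ℤ} (h : m < n) :
    (sumIcc U 0 m).map F ≤ sumIcc U 0 n :=
  map_sumIcc_le fun j _ hjm => map_le_sup_map_sub_smul_one (e j) |>.trans <|
    sup_le (hD.le_sumIcc_zero (by omega)) ((hF j).trans (hD.le_sumIcc_zero (by omega)))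

theorem map_sumIcc_d_le (hD : IsDecomposition d U) {F : Module.End K V} {e : ℤ → K}
    (hF : ∀ j, (U j).map (F - e j • 1) ≤ U (j - 1)) {m n : ℤ} (h : n < m) :
    (sumIcc U m d).map F ≤ sumIcc U n d :=
  map_sumIcc_le fun j hmj _ => map_le_sup_map_sub_smul_one (e j) |>.trans <|
    sup_le (hD.le_sumIcc_d (by omega)) ((hF j).trans (hD.le_sumIcc_d (by omega)))

end IsDecomposition

section SplitDecomposition

variable {d : ℕ} {Vs Vs' : ℤ → Submodule K V}

theorem dec0sD_eq_bot {i : ℤ} (hi : i < 0 ∨ (d : ℤ) < i) : dec0sD d Vs Vs' i = ⊥ := by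
  rcases hi with h | h <;> simp [dec0sD, sumIcc_eq_bot h]

theorem sumIcc_dec0sD_le_zero {m i : ℤ} : sumIcc (dec0sD d Vs Vs') m i ≤ sumIcc Vs' 0 i :=
  sumIcc_le fun _ _ hj => inf_le_left.trans (sumIcc_mono le_rfl hj)

theorem sumIcc_dec0sD_le_d {i n : ℤ} : sumIcc (dec0sD d Vs Vs') i n ≤ sumIcc Vs i d :=
  sumIcc_le fun _ hj _ => inf_le_right.trans (sumIcc_mono hj le_rfl)

theorem dec0sD_comp_sub_left : dec0sD d (fun j => Vs (d - j)) Vs' = dec0s0 d Vs Vs' := by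
  funext i
  simp only [dec0sD, dec0s0, sumIcc_comp_sub, sub_self]

theorem dec0sD_comp_sub_right : dec0sD d Vs (fun j => Vs' (d - j)) = decDsD d Vs Vs' := by
  funext i
  simp only [dec0sD, decDsD, sumIcc_comp_sub, sub_zero]

theorem dec0sD_comp_sub :
    dec0sD d (fun j => Vs (d - j)) (fun j => Vs' (d - j)) = decDs0 d Vs Vs' := by
  funext i
  simp only [dec0sD, decDs0, sumIcc_comp_sub, sub_self, sub_zero]

end SplitDecomposition

namespace IsTridiagonalPair

variable {A A' : Module.End K V} {d : ℕ} {Vs Vs' : ℤ → Submodule K V} {θ θ' : ℤ → K}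

theorem comp_sub_left (h : IsTridiagonalPair A A' d Vs Vs' θ θ') :
    IsTridiagonalPair A A' d (fun j => Vs (d - j)) Vs' (fun j => θ (d - j)) θ' where
  __ := h
  decompV := h.decompV.comp_sub
  eig _ := h.eig _
  theta_inj i j _ _ _ _ he := by
    have := h.theta_inj _ _ (by omega) (by omega) (by omega) (by omega) he
    omega
  trid i := (h.trid (d - i)).trans_eq <| by
    rw [show (d : ℤ) - (i - 1) = d - i + 1 by ring, show (d : ℤ) - (i + 1) = d - i - 1 by ring]
    ac_rfl

theorem comp_sub_right (h : IsTridiagonalPair A A' d Vs Vs' θ θ') :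
    IsTridiagonalPair A A' d Vs (fun j => Vs' (d - j)) θ (fun j => θ' (d - j)) where
  __ := h
  decompV' := h.decompV'.comp_sub
  eig' _ := h.eig' _
  theta'_inj i j _ _ _ _ he := by
    have := h.theta'_inj _ _ (by omega) (by omega) (by omega) (by omega) he
    omega
  trid' i := (h.trid' (d - i)).trans_eq <| by
    rw [show (d : ℤ) - (i - 1) = d - i + 1 by ring, show (d : ℤ) - (i + 1) = d - i - 1 by ring]
    ac_rfl

theorem map_sumIcc_zero_le (h : IsTridiagonalPair A A' d Vs Vs' θ θ') (i : ℤ) :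
    (sumIcc Vs' 0 i).map A ≤ sumIcc Vs' 0 (i + 1) :=
  map_sumIcc_le fun j _ hji => (h.trid' j).trans <| sup_le (sup_le
    (h.decompV'.le_sumIcc_zero (by omega)) (h.decompV'.le_sumIcc_zero (by omega)))
    (h.decompV'.le_sumIcc_zero (by omega))

theorem map_sumIcc_d_le (h : IsTridiagonalPair A A' d Vs Vs' θ θ') (i : ℤ) :
    (sumIcc Vs i d).map A' ≤ sumIcc Vs (i - 1) d :=
  map_sumIcc_le fun j hij _ => (h.trid j).trans <| sup_le (sup_le
    (h.decompV.le_sumIcc_d (by omega)) (h.decompV.le_sumIcc_d (by omega)))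
    (h.decompV.le_sumIcc_d (by omega))

theorem map_sub_smul_inf_le_succ (h : IsTridiagonalPair A A' d Vs Vs' θ θ') (i j : ℤ) :
    (sumIcc Vs' 0 i ⊓ sumIcc Vs j d).map (A - θ j • 1) ≤
      sumIcc Vs' 0 (i + 1) ⊓ sumIcc Vs (j + 1) d :=
  (map_inf_le _).trans <| inf_le_inf
    (map_sub_smul_one_le _ (h.map_sumIcc_zero_le i) (sumIcc_mono le_rfl (by omega)))
    (map_sub_smul_sumIcc_succ_le h.eig j)

theorem map_sub_smul_inf_le_pred (h : IsTridiagonalPair A A' d Vs Vs' θ θ') (i j : ℤ) :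
    (sumIcc Vs' 0 i ⊓ sumIcc Vs j d).map (A' - θ' i • 1) ≤
      sumIcc Vs' 0 (i - 1) ⊓ sumIcc Vs (j - 1) d :=
  (map_inf_le _).trans <| inf_le_inf (map_sub_smul_sumIcc_pred_le h.eig' i)
    (map_sub_smul_one_le _ (h.map_sumIcc_d_le j) (sumIcc_mono (by omega) le_rfl))

theorem iSup_inf_eq_bot_or_eq_top (h : IsTridiagonalPair A A' d Vs Vs' θ θ') (k : ℤ) :
    ⨆ i, sumIcc Vs' 0 i ⊓ sumIcc Vs (i + k) d = ⊥ ∨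
      ⨆ i, sumIcc Vs' 0 i ⊓ sumIcc Vs (i + k) d = ⊤ := by
  set W := fun i => sumIcc Vs' 0 i ⊓ sumIcc Vs (i + k) d
  refine h.irred _ ((Submodule.map_iSup _ _).trans_le (iSup_le fun i => ?_))
    ((Submodule.map_iSup _ _).trans_le (iSup_le fun i => ?_))
  · refine (map_le_sup_map_sub_smul_one (θ (i + k))).trans (sup_le (le_iSup W i) ?_)
    refine (h.map_sub_smul_inf_le_succ i (i + k)).trans ?_
    rw [add_right_comm]
    exact le_iSup W (i + 1)
  · refine (map_le_sup_map_sub_smul_one (θ' i)).trans (sup_le (le_iSup W i) ?_)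
    refine (h.map_sub_smul_inf_le_pred i (i + k)).trans ?_
    rw [← sub_add_eq_add_sub]
    exact le_iSup W (i - 1)

theorem inf_sumIcc_succ_eq_bot (h : IsTridiagonalPair A A' d Vs Vs' θ θ') (i : ℤ) :
    sumIcc Vs' 0 i ⊓ sumIcc Vs (i + 1) d = ⊥ := by
  set W := fun i => sumIcc Vs' 0 i ⊓ sumIcc Vs (i + 1) d
  have hW : ⨆ i, W i ≤ sumIcc Vs 1 d := iSup_le fun i => by
    rcases lt_or_ge i 0 with hi | hi
    · simp [W, sumIcc_eq_bot hi]
    · exact inf_le_right.trans (sumIcc_mono (by omega) le_rfl)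
  refine eq_bot_iff.2 <| (le_iSup W i).trans ((h.iSup_inf_eq_bot_or_eq_top 1).resolve_right ?_).le
  intro htop
  exact h.decompV.ne_bot 0 le_rfl (by omega) <| (h.decompV.disjoint_sumIcc (by omega)).eq_bot_of_le
    (le_top.trans (htop.symm.trans_le hW))

theorem sumIcc_dec0sD_eq_top (h : IsTridiagonalPair A A' d Vs Vs' θ θ') :
    sumIcc (dec0sD d Vs Vs') 0 d = ⊤ := by
  have hsup := (h.iSup_inf_eq_bot_or_eq_top 0).resolve_left fun hbot =>
    h.decompV'.ne_bot 0 le_rfl (by omega) <| eq_bot_iff.2 <|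
      (le_inf (le_sumIcc le_rfl le_rfl) (h.decompV.sumIcc_eq_top ▸ le_top)).trans
        ((le_iSup (fun i => sumIcc Vs' 0 i ⊓ sumIcc Vs (i + 0) d) 0).trans hbot.le)
  simp only [add_zero] at hsup
  exact top_unique <| hsup ▸ iSup_le_sumIcc fun _ => dec0sD_eq_bot

theorem sumIcc_dec0sD_d (h : IsTridiagonalPair A A' d Vs Vs' θ θ') (i : ℤ) :
    sumIcc (dec0sD d Vs Vs') i d = sumIcc Vs i d := by
  have hbot := h.inf_sumIcc_succ_eq_bot (i - 1)
  rw [sub_add_cancel] at hbot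
  refine eq_of_le_of_inf_le_of_le_sup (z := sumIcc (dec0sD d Vs Vs') 0 (i - 1))
    sumIcc_dec0sD_le_d ?_ ?_
  · exact ((inf_le_inf_left _ sumIcc_dec0sD_le_zero).trans
      ((inf_comm _ _).trans_le hbot.le)).trans bot_le
  · rw [sup_comm]
    exact le_top.trans (h.sumIcc_dec0sD_eq_top.ge.trans (sumIcc_le_sup (by omega)))

theorem sumIcc_dec0sD_zero (h : IsTridiagonalPair A A' d Vs Vs' θ θ') (i : ℤ) :
    sumIcc (dec0sD d Vs Vs') 0 i = sumIcc Vs' 0 i :=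
  eq_of_le_of_inf_le_of_le_sup (z := sumIcc (dec0sD d Vs Vs') (i + 1) d) sumIcc_dec0sD_le_zero
    (((inf_le_inf_left _ sumIcc_dec0sD_le_d).trans (h.inf_sumIcc_succ_eq_bot i).le).trans bot_le)
    (le_top.trans (h.sumIcc_dec0sD_eq_top.ge.trans (sumIcc_le_sup le_rfl)))

theorem sumIcc_dec0s0_zero (h : IsTridiagonalPair A A' d Vs Vs' θ θ') (i : ℤ) :
    sumIcc (dec0s0 d Vs Vs') 0 i = sumIcc Vs' 0 i := by
  rw [← dec0sD_comp_sub_left, h.comp_sub_left.sumIcc_dec0sD_zero]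

theorem sumIcc_decDsD_d (h : IsTridiagonalPair A A' d Vs Vs' θ θ') (i : ℤ) :
    sumIcc (decDsD d Vs Vs') i d = sumIcc Vs i d := by
  rw [← dec0sD_comp_sub_right, h.comp_sub_right.sumIcc_dec0sD_d]

theorem sumIcc_decDs0_d (h : IsTridiagonalPair A A' d Vs Vs' θ θ') (i : ℤ) :
    sumIcc (decDs0 d Vs Vs') i d = sumIcc Vs 0 (d - i) := by
  rw [← dec0sD_comp_sub, h.comp_sub_left.comp_sub_right.sumIcc_dec0sD_d, sumIcc_comp_sub, sub_self]

theorem sumIcc_decDs0_zero (h : IsTridiagonalPair A A' d Vs Vs' θ θ') (i : ℤ) :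
    sumIcc (decDs0 d Vs Vs') 0 i = sumIcc Vs' (d - i) d := by
  rw [← dec0sD_comp_sub, h.comp_sub_left.comp_sub_right.sumIcc_dec0sD_zero, sumIcc_comp_sub,
    sub_zero]

variable {L : Module.End K V} {μ : ℤ → K}

theorem map_sub_smul_sumIcc_d_le (h : IsTridiagonalPair A A' d Vs Vs' θ θ')
    (hL : ∀ j, ∀ v ∈ dec0sD d Vs Vs' j, L v = μ j • v) (i : ℤ) :
    (sumIcc Vs i d).map (L - μ i • 1) ≤ sumIcc Vs (i + 1) d := by
  rw [← h.sumIcc_dec0sD_d, ← h.sumIcc_dec0sD_d]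
  exact map_sub_smul_sumIcc_succ_le hL i

theorem map_sub_smul_sumIcc_zero_le (h : IsTridiagonalPair A A' d Vs Vs' θ θ')
    (hL : ∀ j, ∀ v ∈ dec0sD d Vs Vs' j, L v = μ j • v) (i : ℤ) :
    (sumIcc Vs' 0 i).map (L - μ i • 1) ≤ sumIcc Vs' 0 (i - 1) := by
  rw [← h.sumIcc_dec0sD_zero, ← h.sumIcc_dec0sD_zero]
  exact map_sub_smul_sumIcc_pred_le hL i

variable {q : K}

theorem map_sub_zpow_le_succ (h : IsTridiagonalPair A A' d Vs Vs' θ θ') (hq0 : q ≠ 0)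
    (hq : ∀ n : ℕ, 0 < n → q ^ n ≠ 1) {a : K} (ha : a ≠ 0)
    (hθ : ∀ i : ℤ, 0 ≤ i → i ≤ (d : ℤ) → θ i = a * q ^ (2 * i - (d : ℤ)))
    (hL : ∀ j, ∀ v ∈ dec0sD d Vs Vs' j, L v = q ^ ((d : ℤ) - 2 * j) • v) (i : ℤ) :
    (Vs i).map (L - q ^ ((d : ℤ) - 2 * i) • 1) ≤ Vs (i + 1) := by
  by_cases hi : 0 ≤ i ∧ i ≤ (d : ℤ)
  swap
  · rw [h.decompV.eq_bot_of_lt_or_gt (by omega), Submodule.map_bot]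
    exact bot_le
  have hAL : A * L = q ^ (2 : ℤ) • (L * A) + (a * (1 - q ^ (2 : ℤ))) • 1 :=
    mul_eq_smul_mul_add_of_map_sub_smul_le h.sumIcc_dec0sD_eq_top hL
      (fun j => h.map_sub_smul_inf_le_succ j j) (fun j => by rw [← zpow_add₀ hq0]; ring_nf)
      (fun j hj hjd => by rw [hθ j hj hjd, mul_assoc, ← zpow_add₀ hq0]; simp)
  refine (map_mono fun v hv => Module.End.mem_eigenspace_iff.2 (h.eig i v hv)).trans <|
    (map_sub_smul_eigenspace_le hAL ?_).trans <|
    h.decompV.eigenspace_le h.eig fun j hj hjd hji heq => hji ?_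
  · rw [hθ i hi.1 hi.2, mul_assoc, ← zpow_add₀ hq0]
    simp
  · rw [hθ j hj hjd, hθ i hi.1 hi.2, mul_left_comm, ← zpow_add₀ hq0] at heq
    have := zpow_injective_of_pow_ne_one hq0 hq (mul_left_cancel₀ ha heq)
    omega

theorem map_sub_zpow_le_pred (h : IsTridiagonalPair A A' d Vs Vs' θ θ') (hq0 : q ≠ 0)
    (hq : ∀ n : ℕ, 0 < n → q ^ n ≠ 1) {a' : K} (ha' : a' ≠ 0)
    (hθ' : ∀ i : ℤ, 0 ≤ i → i ≤ (d : ℤ) → θ' i = a' * q ^ ((d : ℤ) - 2 * i))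
    (hL : ∀ j, ∀ v ∈ dec0sD d Vs Vs' j, L v = q ^ (2 * j - (d : ℤ)) • v) (i : ℤ) :
    (Vs' i).map (L - q ^ (2 * i - (d : ℤ)) • 1) ≤ Vs' (i - 1) := by
  by_cases hi : 0 ≤ i ∧ i ≤ (d : ℤ)
  swap
  · rw [h.decompV'.eq_bot_of_lt_or_gt (by omega), Submodule.map_bot]
    exact bot_le
  have hAL : A' * L = q ^ (2 : ℤ) • (L * A') + (a' * (1 - q ^ (2 : ℤ))) • 1 :=
    mul_eq_smul_mul_add_of_map_sub_smul_le (s := -1) h.sumIcc_dec0sD_eq_top hL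
      (fun j => by rw [← sub_eq_add_neg]; exact h.map_sub_smul_inf_le_pred j j)
      (fun j => by rw [← zpow_add₀ hq0]; ring_nf)
      (fun j hj hjd => by rw [hθ' j hj hjd, mul_assoc, ← zpow_add₀ hq0]; simp)
  refine (map_mono fun v hv => Module.End.mem_eigenspace_iff.2 (h.eig' i v hv)).trans <|
    (map_sub_smul_eigenspace_le hAL ?_).trans <|
    h.decompV'.eigenspace_le h.eig' fun j hj hjd hji heq => hji ?_
  · rw [hθ' i hi.1 hi.2, mul_assoc, ← zpow_add₀ hq0]
    simp
  · rw [hθ' j hj hjd, hθ' i hi.1 hi.2, mul_left_comm, ← zpow_add₀ hq0] at heq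
    have := zpow_injective_of_pow_ne_one hq0 hq (mul_left_cancel₀ ha' heq)
    omega

end IsTridiagonalPair

theorem stmt10_general {K : Type*} [Field K]
    {V : Type*} [AddCommGroup V] [Module K V]
    (q : K) (hq0 : q ≠ 0) (hq : ∀ n : ℕ, 0 < n → q ^ n ≠ 1)
    (A A' : Module.End K V) (d : ℕ) (Vs Vs' : ℤ → Submodule K V) (θ θ' : ℤ → K)
    (hTD : IsTridiagonalPair A A' d Vs Vs' θ θ')
    (a a' : K) (ha : a ≠ 0) (ha' : a' ≠ 0)
    (hθ : ∀ i : ℤ, 0 ≤ i → i ≤ (d : ℤ) → θ i = a * q ^ (2 * i - (d : ℤ)))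
    (hθ' : ∀ i : ℤ, 0 ≤ i → i ≤ (d : ℤ) → θ' i = a' * q ^ ((d : ℤ) - 2 * i))
    (Kop : Module.End K V)
    (hKop : ∀ i : ℤ, 0 ≤ i → i ≤ (d : ℤ) → ∀ v ∈ dec0sD d Vs Vs' i,
      Kop v = (q ^ (2 * i - (d : ℤ))) • v)
    (Kinv : Module.End K V)
    (hKinv2 : Kinv * Kop = 1)
    :
    ∀ i : ℤ, 0 ≤ i → i ≤ (d : ℤ) →
      -- [0D]
      (Submodule.map (Kop - q ^ (2 * i - (d : ℤ)) • 1) (dec0D Vs i) ≤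
          sumIcc (dec0D Vs) (i + 1) (d : ℤ) ∧
        Submodule.map (Kinv - q ^ ((d : ℤ) - 2 * i) • 1) (dec0D Vs i) ≤ dec0D Vs (i + 1)) ∧
      -- [0*D*]
      (Submodule.map (Kop - q ^ (2 * i - (d : ℤ)) • 1) (dec0sDs Vs' i) ≤ dec0sDs Vs' (i - 1) ∧
        Submodule.map (Kinv - q ^ ((d : ℤ) - 2 * i) • 1) (dec0sDs Vs' i) ≤
          sumIcc (dec0sDs Vs') 0 (i - 1)) ∧
      -- [0*D]
      (Submodule.map (Kop - q ^ (2 * i - (d : ℤ)) • 1) (dec0sD d Vs Vs' i) = ⊥ ∧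
        Submodule.map (Kinv - q ^ ((d : ℤ) - 2 * i) • 1) (dec0sD d Vs Vs' i) = ⊥) ∧
      -- [0*0]
      (Submodule.map (Kop - q ^ (2 * i - (d : ℤ)) • 1) (dec0s0 d Vs Vs' i) ≤
          sumIcc (dec0s0 d Vs Vs') 0 (i - 1) ∧
        Submodule.map (Kinv - q ^ ((d : ℤ) - 2 * i) • 1) (dec0s0 d Vs Vs' i) ≤
          dec0s0 d Vs Vs' (i - 1)) ∧
      -- [D*0]
      (Submodule.map Kop (decDs0 d Vs Vs' i) ≤ sumIcc (decDs0 d Vs Vs') 0 (i + 1) ∧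
        Submodule.map Kinv (decDs0 d Vs Vs' i) ≤ sumIcc (decDs0 d Vs Vs') (i - 1) (d : ℤ)) ∧
      -- [D*D]
      (Submodule.map (Kop - q ^ (2 * i - (d : ℤ)) • 1) (decDsD d Vs Vs' i) ≤
          decDsD d Vs Vs' (i + 1) ∧
        Submodule.map (Kinv - q ^ ((d : ℤ) - 2 * i) • 1) (decDsD d Vs Vs' i) ≤
          sumIcc (decDsD d Vs Vs') (i + 1) (d : ℤ)) := by
  have hK : ∀ j, ∀ v ∈ dec0sD d Vs Vs' j, Kop v = q ^ (2 * j - (d : ℤ)) • v := fun j v hv =>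
    if hj : 0 ≤ j ∧ j ≤ (d : ℤ) then hKop j hj.1 hj.2 v hv else by
      rw [dec0sD_eq_bot (by omega), mem_bot] at hv
      simp [hv]
  have hKinv : ∀ j, ∀ v ∈ dec0sD d Vs Vs' j, Kinv v = q ^ ((d : ℤ) - 2 * j) • v :=
    fun j v hv => apply_eq_smul_of_mul_eq_one hKinv2 (by rw [← zpow_add₀ hq0]; simp) (hK j v hv)
  have hKinvV := hTD.map_sub_zpow_le_succ hq0 hq ha hθ hKinv
  have hKV' := hTD.map_sub_zpow_le_pred hq0 hq ha' hθ' hK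
  intro i hi hid
  refine ⟨⟨?_, hKinvV i⟩, ⟨hKV' i, ?_⟩,
    ⟨map_sub_smul_one_eq_bot (hK i), map_sub_smul_one_eq_bot (hKinv i)⟩,
    ⟨?_, ?_⟩, ⟨?_, ?_⟩, ⟨?_, ?_⟩⟩
  · exact (map_mono (le_sumIcc le_rfl hid)).trans (hTD.map_sub_smul_sumIcc_d_le hK i)
  · exact (map_mono (le_sumIcc hi le_rfl)).trans (hTD.map_sub_smul_sumIcc_zero_le hKinv i)
  · rw [hTD.sumIcc_dec0s0_zero]
    exact (map_mono inf_le_left).trans (hTD.map_sub_smul_sumIcc_zero_le hK i)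
  · exact (map_inf_le _).trans <| inf_le_inf (hTD.map_sub_smul_sumIcc_zero_le hKinv i) <|
      map_sub_smul_one_le _ (hTD.decompV.map_sumIcc_zero_le hKinvV (by omega))
        (sumIcc_mono le_rfl (by omega))
  · rw [hTD.sumIcc_decDs0_zero]
    exact (map_mono inf_le_left).trans (hTD.decompV'.map_sumIcc_d_le hKV' (by omega))
  · rw [hTD.sumIcc_decDs0_d]
    exact (map_mono inf_le_right).trans (hTD.decompV.map_sumIcc_zero_le hKinvV (by omega))
  · exact (map_inf_le _).trans <| inf_le_inf (map_sub_smul_one_le _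
      (hTD.decompV'.map_sumIcc_d_le hKV' (by omega)) (sumIcc_mono (by omega) le_rfl))
      (hTD.map_sub_smul_sumIcc_d_le hK i)
  · rw [hTD.sumIcc_decDsD_d]
    exact (map_mono inf_le_right).trans (hTD.map_sub_smul_sumIcc_d_le hKinv i)

/-- the actions of `K` and `K⁻¹` on the six decompositions. -/
theorem stmt10 {K : Type*} [Field K] [IsAlgClosed K]
    {V : Type*} [AddCommGroup V] [Module K V] [FiniteDimensional K V] [Nontrivial V]
    (q : K) (hq0 : q ≠ 0) (hq : ∀ n : ℕ, 0 < n → q ^ n ≠ 1)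
    (A A' : Module.End K V) (d : ℕ) (Vs Vs' : ℤ → Submodule K V) (θ θ' : ℤ → K)
    (hTD : IsTridiagonalPair A A' d Vs Vs' θ θ')
    (a a' : K) (ha : a ≠ 0) (ha' : a' ≠ 0)
    (hθ : ∀ i : ℤ, 0 ≤ i → i ≤ (d : ℤ) → θ i = a * q ^ (2 * i - (d : ℤ)))
    (hθ' : ∀ i : ℤ, 0 ≤ i → i ≤ (d : ℤ) → θ' i = a' * q ^ ((d : ℤ) - 2 * i))
    (b b' : K) (hb : b ≠ 0) (hb' : b' ≠ 0)
    (B : Module.End K V)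
    (hB : ∀ i : ℤ, 0 ≤ i → i ≤ (d : ℤ) → ∀ v ∈ dec0s0 d Vs Vs' i,
      B v = (b * q ^ (2 * i - (d : ℤ))) • v)
    (B' : Module.End K V)
    (hB' : ∀ i : ℤ, 0 ≤ i → i ≤ (d : ℤ) → ∀ v ∈ decDsD d Vs Vs' i,
      B' v = (b' * q ^ ((d : ℤ) - 2 * i)) • v)
    (Kop : Module.End K V)
    (hKop : ∀ i : ℤ, 0 ≤ i → i ≤ (d : ℤ) → ∀ v ∈ dec0sD d Vs Vs' i,
      Kop v = (q ^ (2 * i - (d : ℤ))) • v)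
    (Ks : Module.End K V)
    (hKs : ∀ i : ℤ, 0 ≤ i → i ≤ (d : ℤ) → ∀ v ∈ decDs0 d Vs Vs' i,
      Ks v = (q ^ (2 * i - (d : ℤ))) • v)
    (Kinv Ksinv : Module.End K V)
    (hKinv1 : Kop * Kinv = 1) (hKinv2 : Kinv * Kop = 1)
    (hKsinv1 : Ks * Ksinv = 1) (hKsinv2 : Ksinv * Ks = 1)
    :
    ∀ i : ℤ, 0 ≤ i → i ≤ (d : ℤ) →
      -- [0D]
      (Submodule.map (Kop - q ^ (2 * i - (d : ℤ)) • 1) (dec0D Vs i) ≤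
          sumIcc (dec0D Vs) (i + 1) (d : ℤ) ∧
        Submodule.map (Kinv - q ^ ((d : ℤ) - 2 * i) • 1) (dec0D Vs i) ≤ dec0D Vs (i + 1)) ∧
      -- [0*D*]
      (Submodule.map (Kop - q ^ (2 * i - (d : ℤ)) • 1) (dec0sDs Vs' i) ≤ dec0sDs Vs' (i - 1) ∧
        Submodule.map (Kinv - q ^ ((d : ℤ) - 2 * i) • 1) (dec0sDs Vs' i) ≤
          sumIcc (dec0sDs Vs') 0 (i - 1)) ∧
      -- [0*D]
      (Submodule.map (Kop - q ^ (2 * i - (d : ℤ)) • 1) (dec0sD d Vs Vs' i) = ⊥ ∧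
        Submodule.map (Kinv - q ^ ((d : ℤ) - 2 * i) • 1) (dec0sD d Vs Vs' i) = ⊥) ∧
      -- [0*0]
      (Submodule.map (Kop - q ^ (2 * i - (d : ℤ)) • 1) (dec0s0 d Vs Vs' i) ≤
          sumIcc (dec0s0 d Vs Vs') 0 (i - 1) ∧
        Submodule.map (Kinv - q ^ ((d : ℤ) - 2 * i) • 1) (dec0s0 d Vs Vs' i) ≤
          dec0s0 d Vs Vs' (i - 1)) ∧
      -- [D*0]
      (Submodule.map Kop (decDs0 d Vs Vs' i) ≤ sumIcc (decDs0 d Vs Vs') 0 (i + 1) ∧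
        Submodule.map Kinv (decDs0 d Vs Vs' i) ≤ sumIcc (decDs0 d Vs Vs') (i - 1) (d : ℤ)) ∧
      -- [D*D]
      (Submodule.map (Kop - q ^ (2 * i - (d : ℤ)) • 1) (decDsD d Vs Vs' i) ≤
          decDsD d Vs Vs' (i + 1) ∧
        Submodule.map (Kinv - q ^ ((d : ℤ) - 2 * i) • 1) (decDsD d Vs Vs' i) ≤
          sumIcc (decDsD d Vs Vs') (i + 1) (d : ℤ)) :=
  stmt10_general q hq0 hq A A' d Vs Vs' θ θ' hTD a a' ha ha' hθ hθ' Kop hKop Kinv hKinv2
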